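/- Let c_1, c_2 > 0 with c_1 ≤ 2 and c_2 ≤ 2, and suppose (1 + e^{−c_1})(1 + e^{−c_2}) > 2. Then the value at z̄ = (c_1, c_2) of the sensitivity function g_0^T(z̄) g_0(z̄) = e^{−(c_1+c_2)}(1 + e^{c_1} + e^{c_2}) equals (1+e^{−c_1})(1+e^{−c_2}) − 1 and is strictly greater than 1; consequently the three-point design with support (0,0), (c_1,0), (0,c_2) and uniform weights is not D-optimal for the model f_0(z) = e^{−(z_1+z_2)/2}(1, z_1, z_2)^T on [0,c_1]×[0,c_2]. -/

import Mathlib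

open Matrix Real Finset

/-!
Let `C` be the matrix whose columns are the support vectors `f₀(0,0), f₀(c₁,0), f₀(0,c₂)` and
`g = C⁻¹ f₀(c₁,c₂)`, so that `‖g‖²` is the sensitivity function at `z̄ = (c₁,c₂)`. The mixture
`(1 - α) ζ + α δ_z̄` of the uniform design `ζ` with the point mass at `z̄` has information matrix
`C ((1 - α)/3 · I + α g gᵀ) Cᵀ`, so by the matrix determinant lemma its determinant is
`det C² (1 - α)² (1 + (3‖g‖² - 1) α) / 27`. At `α = 0` this is `det M(ζ)`, and its derivative
there has the sign of `‖g‖² - 1 > 0`; hence a small `α` gives a strictly better design.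
-/

/-- The regression vector `f₀(z) = e^(−(z₁+z₂)/2) (1, z₁, z₂)ᵀ`. -/
noncomputable def f0 (z : ℝ × ℝ) : Fin 3 → ℝ :=
  fun i => Real.exp (-(z.1 + z.2) / 2) * ![1, z.1, z.2] i

/-- Information matrix of a finitely supported design. -/
noncomputable def infoM (s : Finset (ℝ × ℝ)) (w : ℝ × ℝ → ℝ) : Matrix (Fin 3) (Fin 3) ℝ :=
  ∑ z ∈ s, w z • Matrix.vecMulVec (f0 z) (f0 z)

theorem Matrix.vecMulVec_mulVec_mulVec {m n R : Type*} [Fintype n] [CommSemiring R]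
    (C : Matrix m n R) (x y : n → R) :
    vecMulVec (C *ᵥ x) (C *ᵥ y) = C * vecMulVec x y * Cᵀ := by
  rw [mul_vecMulVec, vecMulVec_mul, vecMul_transpose]

theorem Matrix.mul_diagonal_mul_transpose {m n R : Type*} [Fintype n] [DecidableEq n]
    [CommSemiring R] (C : Matrix m n R) (d : n → R) :
    C * diagonal d * Cᵀ = ∑ k, d k • vecMulVec (Cᵀ k) (Cᵀ k) := by
  ext i j
  rw [mul_apply]
  simp only [mul_diagonal, transpose_apply, Matrix.sum_apply, smul_apply, vecMulVec_apply,
    smul_eq_mul]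
  exact Finset.sum_congr rfl fun k _ => by ring

theorem Matrix.det_smul_one_add_vecMulVec {n R : Type*} [Fintype n] [DecidableEq n] [Field R]
    {a : R} (ha : a ≠ 0) (u v : n → R) :
    det (a • 1 + vecMulVec u v) = a ^ Fintype.card n * (1 + v ⬝ᵥ u / a) := by
  have : a • 1 + vecMulVec u v = a • (1 + replicateCol Unit (a⁻¹ • u) * replicateRow Unit v) := by
    rw [← vecMulVec_eq, smul_vecMulVec, smul_add, smul_smul, mul_inv_cancel₀ ha, one_smul]
  rw [this, det_smul, det_one_add_replicateCol_mul_replicateRow, dotProduct_smul, smul_eq_mul,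
    inv_mul_eq_div]

theorem exp_neg_add_mul_one_add_exp_add_exp (a b : ℝ) :
    exp (-(a + b)) * (1 + exp a + exp b) = (1 + exp (-a)) * (1 + exp (-b)) - 1 := by
  rw [neg_add, exp_add, exp_neg, exp_neg]
  field_simp
  ring

theorem exists_one_lt_one_sub_sq_mul_one_add_mul {t : ℝ} (ht : 2 < t) :
    ∃ α : ℝ, 0 < α ∧ α < 1 ∧ 1 < (1 - α) ^ 2 * (1 + t * α) := by
  have ht0 : 0 < t := by linarith
  refine ⟨(t - 2) / (2 * t), by positivity, by rw [div_lt_one (by positivity)]; linarith, ?_⟩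
  have key : (1 - (t - 2) / (2 * t)) ^ 2 * (1 + t * ((t - 2) / (2 * t)))
      = 1 + (t - 2) ^ 2 / (8 * t) := by
    field_simp
    ring
  rw [key]
  have : 0 < (t - 2) ^ 2 / (8 * t) := by
    have : 0 < t - 2 := by linarith
    positivity
  linarith

section design

variable (c₁ c₂ : ℝ)

noncomputable def supportMatrix : Matrix (Fin 3) (Fin 3) ℝ :=
  (of ![f0 (0, 0), f0 (c₁, 0), f0 (0, c₂)])ᵀ

/-- `g₀(z̄) = C⁻¹ f₀(z̄)` at `z̄ = (c₁, c₂)`, with `C = supportMatrix c₁ c₂`. -/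
noncomputable def g0bar : Fin 3 → ℝ :=
  ![-(exp (-c₁ / 2) * exp (-c₂ / 2)), exp (-c₂ / 2), exp (-c₁ / 2)]

noncomputable abbrev cornerSupport : Finset (ℝ × ℝ) := {(0, 0), (c₁, 0), (0, c₂)}

/-- The weights of the design `(1 - α) ζ + α δ_z̄`, with `ζ` uniform on `cornerSupport c₁ c₂`. -/
noncomputable def mixtureWeights (α : ℝ) (z : ℝ × ℝ) : ℝ :=
  if z = (c₁, c₂) then α else (1 - α) / 3

theorem det_supportMatrix :
    det (supportMatrix c₁ c₂) = exp (-c₁ / 2) * exp (-c₂ / 2) * c₁ * c₂ := by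
  simp [supportMatrix, det_fin_three, f0]
  ring

theorem f0_eq_supportMatrix_mulVec : f0 (c₁, c₂) = supportMatrix c₁ c₂ *ᵥ g0bar c₁ c₂ := by
  ext i
  fin_cases i <;>
    simp [supportMatrix, g0bar, f0, mulVec, dotProduct, Fin.sum_univ_three, add_div, exp_add] <;>
    ring

theorem g0bar_dotProduct_self :
    g0bar c₁ c₂ ⬝ᵥ g0bar c₁ c₂ = exp (-(c₁ + c₂)) * (1 + exp c₁ + exp c₂) := by
  have h₁ : exp (-c₁ / 2) * exp (-c₁ / 2) = exp (-c₁) := by rw [← exp_add]; ring_nf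
  have h₂ : exp (-c₂ / 2) * exp (-c₂ / 2) = exp (-c₂) := by rw [← exp_add]; ring_nf
  calc g0bar c₁ c₂ ⬝ᵥ g0bar c₁ c₂ = (1 + exp (-c₁)) * (1 + exp (-c₂)) - 1 := by
        simp [g0bar, dotProduct, Fin.sum_univ_three, ← h₁, ← h₂]
        ring
    _ = exp (-(c₁ + c₂)) * (1 + exp c₁ + exp c₂) :=
        (exp_neg_add_mul_one_add_exp_add_exp c₁ c₂).symm

theorem infoM_cornerSupport_eq (hc₁ : c₁ ≠ 0) (hc₂ : c₂ ≠ 0) (w : ℝ × ℝ → ℝ) :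
    infoM (cornerSupport c₁ c₂) w
      = supportMatrix c₁ c₂ * diagonal ![w (0, 0), w (c₁, 0), w (0, c₂)]
          * (supportMatrix c₁ c₂)ᵀ := by
  rw [mul_diagonal_mul_transpose, Fin.sum_univ_three, infoM,
    sum_insert (by simp [hc₁.symm, hc₂.symm]), sum_insert (by simp [hc₁]), sum_singleton, add_assoc]
  rfl

theorem infoM_insert_cornerSupport (hc₁ : c₁ ≠ 0) (hc₂ : c₂ ≠ 0) (w : ℝ × ℝ → ℝ) :
    infoM (insert (c₁, c₂) (cornerSupport c₁ c₂)) w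
      = supportMatrix c₁ c₂ * (diagonal ![w (0, 0), w (c₁, 0), w (0, c₂)]
          + w (c₁, c₂) • vecMulVec (g0bar c₁ c₂) (g0bar c₁ c₂)) * (supportMatrix c₁ c₂)ᵀ := by
  rw [infoM, sum_insert (by simp [hc₁, hc₂]), ← infoM, infoM_cornerSupport_eq c₁ c₂ hc₁ hc₂,
    f0_eq_supportMatrix_mulVec, vecMulVec_mulVec_mulVec, mul_add, add_mul, add_comm,
    mul_smul_comm, smul_mul_assoc]

theorem det_infoM_cornerSupport (hc₁ : c₁ ≠ 0) (hc₂ : c₂ ≠ 0) :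
    det (infoM (cornerSupport c₁ c₂) fun _ => 1 / 3) = det (supportMatrix c₁ c₂) ^ 2 / 27 := by
  rw [infoM_cornerSupport_eq c₁ c₂ hc₁ hc₂, det_mul, det_mul, det_transpose, det_diagonal,
    Fin.prod_univ_three]
  simp only [cons_val_zero, cons_val_one, cons_val_two, Nat.succ_eq_add_one, Nat.reduceAdd,
    tail_cons, head_cons]
  ring

theorem det_infoM_mixtureWeights (hc₁ : c₁ ≠ 0) (hc₂ : c₂ ≠ 0) {α : ℝ} (hα : α < 1) :
    det (infoM (insert (c₁, c₂) (cornerSupport c₁ c₂)) (mixtureWeights c₁ c₂ α))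
      = det (supportMatrix c₁ c₂) ^ 2
          * ((1 - α) ^ 2 * (1 + (3 * (g0bar c₁ c₂ ⬝ᵥ g0bar c₁ c₂) - 1) * α)) / 27 := by
  have hdiag : diagonal ![mixtureWeights c₁ c₂ α (0, 0), mixtureWeights c₁ c₂ α (c₁, 0),
      mixtureWeights c₁ c₂ α (0, c₂)] = ((1 - α) / 3) • 1 := by
    ext i j
    fin_cases i <;> fin_cases j <;> simp [mixtureWeights, hc₁.symm, hc₂.symm]
  have h1α : 1 - α ≠ 0 := sub_ne_zero.mpr hα.ne'
  have ha : (1 - α) / 3 ≠ 0 := by positivity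
  rw [infoM_insert_cornerSupport c₁ c₂ hc₁ hc₂, det_mul, det_mul, det_transpose, hdiag,
    ← vecMulVec_smul, det_smul_one_add_vecMulVec ha, Fintype.card_fin, smul_dotProduct]
  simp only [mixtureWeights, if_true, smul_eq_mul]
  field_simp
  ring

theorem mixtureWeights_pos {α : ℝ} (hα₀ : 0 < α) (hα₁ : α < 1) (z : ℝ × ℝ) :
    0 < mixtureWeights c₁ c₂ α z := by
  unfold mixtureWeights
  split_ifs <;> linarith

theorem sum_mixtureWeights (hc₁ : c₁ ≠ 0) (hc₂ : c₂ ≠ 0) (α : ℝ) :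
    ∑ z ∈ insert (c₁, c₂) (cornerSupport c₁ c₂), mixtureWeights c₁ c₂ α z = 1 := by
  rw [sum_insert (by simp [hc₁, hc₂]), sum_insert (by simp [hc₁.symm, hc₂.symm]),
    sum_insert (by simp [hc₁]), sum_singleton]
  simp [mixtureWeights, hc₁.symm, hc₂.symm]
  ring

theorem coe_insert_cornerSupport_subset (hc₁ : 0 ≤ c₁) (hc₂ : 0 ≤ c₂) :
    ↑(insert (c₁, c₂) (cornerSupport c₁ c₂)) ⊆ Set.Icc 0 c₁ ×ˢ Set.Icc 0 c₂ := by
  intro z hz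
  simp only [coe_insert, coe_singleton, Set.mem_insert_iff, Set.mem_singleton_iff] at hz
  rcases hz with rfl | rfl | rfl | rfl <;> simp [hc₁, hc₂]

end design

theorem stmt16_general (c₁ c₂ : ℝ) (hc₁ : 0 < c₁) (hc₂ : 0 < c₂)
    (hKW : 2 < (1 + Real.exp (-c₁)) * (1 + Real.exp (-c₂))) :
    (Real.exp (-(c₁ + c₂)) * (1 + Real.exp c₁ + Real.exp c₂)
        = (1 + Real.exp (-c₁)) * (1 + Real.exp (-c₂)) - 1)
    ∧ 1 < Real.exp (-(c₁ + c₂)) * (1 + Real.exp c₁ + Real.exp c₂)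
    ∧ ∃ (s : Finset (ℝ × ℝ)) (w : ℝ × ℝ → ℝ),
        (↑s ⊆ Set.Icc 0 c₁ ×ˢ Set.Icc 0 c₂) ∧ (∀ z ∈ s, 0 < w z) ∧ (∑ z ∈ s, w z = 1) ∧
        (infoM {((0 : ℝ), (0 : ℝ)), (c₁, 0), (0, c₂)} (fun _ => (1 : ℝ) / 3)).det
          < (infoM s w).det := by
  have hsens := exp_neg_add_mul_one_add_exp_add_exp c₁ c₂
  have hS : 1 < g0bar c₁ c₂ ⬝ᵥ g0bar c₁ c₂ := by
    rw [g0bar_dotProduct_self, hsens]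
    linarith
  obtain ⟨α, hα₀, hα₁, hgain⟩ :=
    exists_one_lt_one_sub_sq_mul_one_add_mul (t := 3 * (g0bar c₁ c₂ ⬝ᵥ g0bar c₁ c₂) - 1)
      (by linarith)
  refine ⟨hsens, by linarith, insert (c₁, c₂) (cornerSupport c₁ c₂), mixtureWeights c₁ c₂ α,
    coe_insert_cornerSupport_subset c₁ c₂ hc₁.le hc₂.le,
    fun z _ => mixtureWeights_pos c₁ c₂ hα₀ hα₁ z, sum_mixtureWeights c₁ c₂ hc₁.ne' hc₂.ne' α, ?_⟩
  have hC : 0 < det (supportMatrix c₁ c₂) ^ 2 := by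
    rw [det_supportMatrix]
    positivity
  rw [det_infoM_cornerSupport c₁ c₂ hc₁.ne' hc₂.ne',
    det_infoM_mixtureWeights c₁ c₂ hc₁.ne' hc₂.ne' hα₁]
  linarith [mul_lt_mul_of_pos_left hgain hC]

/-- If `c₁, c₂ ∈ (0,2]` and `(1+e^(−c₁))(1+e^(−c₂)) > 2`, then the value of the
sensitivity function at `(c₁,c₂)`, namely `e^(−(c₁+c₂))(1+e^(c₁)+e^(c₂))`, equals
`(1+e^(−c₁))(1+e^(−c₂)) − 1 > 1`; consequently the uniformly weighted three-point design on
`(0,0), (c₁,0), (0,c₂)` is not D-optimal for `f₀` on `[0,c₁]×[0,c₂]`: some design on the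
rectangle has strictly larger determinant of its information matrix. -/
theorem stmt16 (c₁ c₂ : ℝ) (hc₁ : 0 < c₁) (hc₂ : 0 < c₂) (hc₁2 : c₁ ≤ 2) (hc₂2 : c₂ ≤ 2)
    (hKW : 2 < (1 + Real.exp (-c₁)) * (1 + Real.exp (-c₂))) :
    (Real.exp (-(c₁ + c₂)) * (1 + Real.exp c₁ + Real.exp c₂)
        = (1 + Real.exp (-c₁)) * (1 + Real.exp (-c₂)) - 1)
    ∧ 1 < Real.exp (-(c₁ + c₂)) * (1 + Real.exp c₁ + Real.exp c₂)
    ∧ ∃ (s : Finset (ℝ × ℝ)) (w : ℝ × ℝ → ℝ),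
        (↑s ⊆ Set.Icc 0 c₁ ×ˢ Set.Icc 0 c₂) ∧ (∀ z ∈ s, 0 < w z) ∧ (∑ z ∈ s, w z = 1) ∧
        (infoM {((0 : ℝ), (0 : ℝ)), (c₁, 0), (0, c₂)} (fun _ => (1 : ℝ) / 3)).det
          < (infoM s w).det :=
  stmt16_general c₁ c₂ hc₁ hc₂ hKW
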